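/- Let L be a complete lattice. For every family {A_i}_{i ∈ I} of subsets of L one has 𝒞(⋃_{i} 𝒞(A_i)) = 𝒞(⋃_{i} A_i). -/
import Mathlib


/-- A subset `S` of a complete lattice is *distributive* if
`a ⊓ sSup S = ⨆ s ∈ S, a ⊓ s` for every `a`. -/
def IsDistrib {L : Type*} [CompleteLattice L] (S : Set L) : Prop :=
  ∀ a : L, a ⊓ sSup S = ⨆ s ∈ S, a ⊓ s

/-- A *distributive ideal* is a lower set closed under suprema of its
distributive subsets. -/
def IsDistribIdeal {L : Type*} [CompleteLattice L] (I : Set L) : Prop :=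
  IsLowerSet I ∧ ∀ S : Set L, S ⊆ I → IsDistrib S → sSup S ∈ I

/-- The lower set `↓A` generated by `A`. -/
def downSet {L : Type*} [CompleteLattice L] (A : Set L) : Set L :=
  {x | ∃ a ∈ A, x ≤ a}

/-- The closure `𝒞(A) = { sSup B | B ⊆ ↓A, B distributive }`. -/
def distClosure {L : Type*} [CompleteLattice L] (A : Set L) : Set L :=
  {x | ∃ B : Set L, B ⊆ downSet A ∧ IsDistrib B ∧ x = sSup B}

section Aux

variable {L : Type*} [CompleteLattice L]

lemma isLowerSet_downSet (A : Set L) : IsLowerSet (downSet A) := by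
  intro a b hba ha
  obtain ⟨c, hc, hac⟩ := ha
  exact ⟨c, hc, hba.trans hac⟩

lemma subset_downSet (A : Set L) : A ⊆ downSet A := fun a ha => ⟨a, ha, le_rfl⟩

lemma downSet_mono {A B : Set L} (h : A ⊆ B) : downSet A ⊆ downSet B := by
  rintro x ⟨a, ha, hxa⟩
  exact ⟨a, h ha, hxa⟩

lemma isDistrib_singleton (a : L) : IsDistrib ({a} : Set L) := by
  intro x; simp

lemma subset_distClosure (A : Set L) : A ⊆ distClosure A := fun a ha =>
  ⟨{a}, by simpa using subset_downSet A ha, isDistrib_singleton a, by simp⟩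

lemma distClosure_mono {A B : Set L} (h : A ⊆ B) : distClosure A ⊆ distClosure B := by
  rintro x ⟨S, hS, hd, hx⟩
  exact ⟨S, hS.trans (downSet_mono h), hd, hx⟩

lemma isLowerSet_distClosure (A : Set L) : IsLowerSet (distClosure A) := by
  rintro y x hxy ⟨B, hB, hBd, rfl⟩
  have h1 : (⨆ b ∈ B, x ⊓ b) = x := (hBd x).symm.trans (inf_eq_left.mpr hxy)
  refine ⟨(fun b => x ⊓ b) '' B, ?_, ?_, ?_⟩
  · rintro s ⟨b, hb, rfl⟩
    exact isLowerSet_downSet A inf_le_right (hB hb)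
  · intro a
    rw [sSup_image, h1, iSup_image]
    simp_rw [← inf_assoc]
    rw [← hBd (a ⊓ x)]
    exact (inf_eq_left.mpr (inf_le_right.trans hxy)).symm
  · rw [sSup_image, h1]

lemma distClosure_sSup_mem {A S : Set L} (hS : S ⊆ distClosure A) (hSd : IsDistrib S) :
    sSup S ∈ distClosure A := by
  choose f hsub hdist heq using fun s (hs : s ∈ S) => hS hs
  set B : Set L := ⋃ s, ⋃ h : s ∈ S, f s h with hBdef
  have hmem : ∀ b, b ∈ B ↔ ∃ s, ∃ h : s ∈ S, b ∈ f s h := by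
    intro b; simp [hBdef, Set.mem_iUnion]
  have hsupB : sSup B = sSup S := by
    apply le_antisymm
    · refine sSup_le fun b hb => ?_
      obtain ⟨s, hs, hbf⟩ := (hmem b).mp hb
      have hbs : b ≤ s := (heq s hs) ▸ le_sSup hbf
      exact hbs.trans (le_sSup hs)
    · refine sSup_le fun s hs => ?_
      rw [heq s hs]
      exact sSup_le_sSup fun b hb => (hmem b).mpr ⟨s, hs, hb⟩
  have key : ∀ a : L, (⨆ s ∈ S, a ⊓ s) = ⨆ b ∈ B, a ⊓ b := by
    intro a
    apply le_antisymm
    · refine iSup₂_le fun s hs => ?_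
      rw [heq s hs, hdist s hs a]
      exact iSup₂_le fun b hb => le_iSup₂_of_le b ((hmem b).mpr ⟨s, hs, hb⟩) le_rfl
    · refine iSup₂_le fun b hb => ?_
      obtain ⟨s, hs, hbf⟩ := (hmem b).mp hb
      have hbs : b ≤ s := (heq s hs) ▸ le_sSup hbf
      exact le_iSup₂_of_le s hs (inf_le_inf_left a hbs)
  refine ⟨B, ?_, ?_, hsupB.symm⟩
  · intro b hb
    obtain ⟨s, hs, hbf⟩ := (hmem b).mp hb
    exact hsub s hs hbf
  · intro a
    rw [hsupB, hSd a]
    exact key a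

lemma isDistribIdeal_distClosure (A : Set L) : IsDistribIdeal (distClosure A) :=
  ⟨isLowerSet_distClosure A, fun _ hS hSd => distClosure_sSup_mem hS hSd⟩

lemma distClosure_min {A I : Set L} (hI : IsDistribIdeal I) (hAI : A ⊆ I) :
    distClosure A ⊆ I := by
  rintro x ⟨B, hB, hBd, rfl⟩
  refine hI.2 B (fun b hb => ?_) hBd
  obtain ⟨a, ha, hba⟩ := hB hb
  exact hI.1 hba (hAI ha)

end Aux

/-- `𝒞(⋃ i, 𝒞(A i)) = 𝒞(⋃ i, A i)` for every family of subsets. -/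
theorem distClosure_iUnion_distClosure {L : Type*} [CompleteLattice L] {ι : Type*}
    (A : ι → Set L) :
    distClosure (⋃ i, distClosure (A i)) = distClosure (⋃ i, A i) := by
  apply Set.Subset.antisymm
  · refine distClosure_min (isDistribIdeal_distClosure _) ?_
    refine Set.iUnion_subset fun i => distClosure_mono ?_
    exact Set.subset_iUnion A i
  · exact distClosure_mono (Set.iUnion_mono fun i => subset_distClosure (A i))
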